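/- Let f : ℝⁿ → ℝ be continuously differentiable and λ-strongly convex with L-Lipschitz gradient (0 < λ, L), let μ > 0, φ(x) = f(x) + μ‖x‖₁, and let x⋆ be a global minimizer of φ. Define the ISTA iteration x^{k+1} = S_{μ/L}(x^k − (1/L)∇f(x^k)) starting from any x⁰ ∈ ℝⁿ. Then for all k ≥ 0, φ(x^k) − φ(x⋆) ≤ (1 − λ/L)^k (φ(x⁰) − φ(x⋆)). -/

import Mathlib

/-! The smooth part is sandwiched between two quadratic models at `y`: strong convexity gives
`f ≥ f y + ⟪∇f y, · - y⟫ + λ/2 ‖· - y‖²` and the Lipschitz gradient gives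
`f ≤ f y + ⟪∇f y, · - y⟫ + L/2 ‖· - y‖²`. Soft-thresholding minimizes the upper model plus
`μ‖·‖₁` coordinatewise, so `φ (x (k+1))` is at most the value of that model at
`z = t • x⋆ + (1 - t) • x k`. For `t = λ/L` the gap `(L - λ)/2 · t² ‖x⋆ - x k‖²` between the two
models at `z` is exactly the strong-convexity gain `λ/2 · t(1 - t) ‖x⋆ - x k‖²`, whence
`φ (x (k+1)) ≤ t φ x⋆ + (1 - t) φ (x k)`. -/

open scoped InnerProductSpace
open Set AffineMap

section FirstOrder

variable {E : Type*} [NormedAddCommGroup E] [InnerProductSpace ℝ E]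
  {f : E → ℝ} {g a b : E} {m L : ℝ}

lemma strongConvexOn_univ_of_forall
    (hf : ∀ x y : E, ∀ t ∈ Icc (0 : ℝ) 1,
      f (t • x + (1 - t) • y) ≤ t * f x + (1 - t) * f y - m / 2 * t * (1 - t) * ‖x - y‖ ^ 2) :
    StrongConvexOn univ m f := by
  refine ⟨convex_univ, fun x _ y _ a b ha hb hab ↦ ?_⟩
  obtain rfl : b = 1 - a := eq_sub_of_add_eq' hab
  have := hf x y a ⟨ha, by linarith⟩
  simp only [smul_eq_mul]
  linarith

variable [CompleteSpace E]

lemma HasGradientAt.hasDerivAt_comp_lineMap {t : ℝ} (hf : HasGradientAt f g (lineMap a b t)) :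
    HasDerivAt (fun s ↦ f (lineMap a b s)) ⟪g, b - a⟫_ℝ t := by
  have h := hf.hasFDerivAt.comp_hasDerivAt t hasDerivAt_lineMap
  rwa [InnerProductSpace.toDual_apply_apply] at h

lemma StrongConvexOn.add_inner_add_le (hf : StrongConvexOn univ m f)
    (hg : HasGradientAt f g a) (b : E) :
    f a + ⟪g, b - a⟫_ℝ + m / 2 * ‖b - a‖ ^ 2 ≤ f b := by
  have hconv := (strongConvexOn_iff_convex.1 hf).comp_affineMap (lineMap a b)
  have hderiv : HasDerivAt (fun t : ℝ ↦ f (lineMap a b t) - m / 2 * ‖lineMap a b t‖ ^ 2)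
      (⟪g, b - a⟫_ℝ - m / 2 * (2 * ⟪a, b - a⟫_ℝ)) 0 := by
    have h := (hasDerivAt_lineMap (a := a) (b := b) (x := (0 : ℝ))).norm_sq
    rw [lineMap_apply_zero] at h
    exact (HasGradientAt.hasDerivAt_comp_lineMap (t := 0) (by simpa using hg)).sub (h.const_mul _)
  have hslope := hconv.le_slope_of_hasDerivAt (mem_univ 0) (mem_univ 1) zero_lt_one hderiv
  simp only [slope_def_field, Function.comp_apply, lineMap_apply_zero, lineMap_apply_one,
    sub_zero, div_one] at hslope
  have hb : ‖b‖ ^ 2 = ‖a‖ ^ 2 + 2 * ⟪a, b - a⟫_ℝ + ‖b - a‖ ^ 2 := by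
    simpa using norm_add_sq_real a (b - a)
  linear_combination hslope - m / 2 * hb

lemma le_add_inner_add_of_lipschitz_gradient (hf : Differentiable ℝ f)
    (hlip : ∀ x y, ‖gradient f x - gradient f y‖ ≤ L * ‖x - y‖) (a b : E) :
    f b ≤ f a + ⟪gradient f a, b - a⟫_ℝ + L / 2 * ‖b - a‖ ^ 2 := by
  set k : ℝ → ℝ := fun t ↦
    f (lineMap a b t) - t * ⟪gradient f a, b - a⟫_ℝ - L / 2 * t ^ 2 * ‖b - a‖ ^ 2
  have hk : ∀ t, HasDerivAt k
      (⟪gradient f (lineMap a b t) - gradient f a, b - a⟫_ℝ - L * t * ‖b - a‖ ^ 2) t := by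
    intro t
    have h := ((HasGradientAt.hasDerivAt_comp_lineMap (a := a) (b := b) (hf _).hasGradientAt).sub
      ((hasDerivAt_id t).mul_const ⟪gradient f a, b - a⟫_ℝ)).sub
      (((hasDerivAt_pow 2 t).const_mul (L / 2)).mul_const (‖b - a‖ ^ 2))
    refine h.congr_deriv ?_
    rw [inner_sub_left]
    simp only [Nat.cast_ofNat, Nat.add_one_sub_one, pow_one, one_mul]
    ring
  have hk_nonpos : ∀ t ∈ interior (Ici (0 : ℝ)),
      ⟪gradient f (lineMap a b t) - gradient f a, b - a⟫_ℝ - L * t * ‖b - a‖ ^ 2 ≤ 0 := by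
    intro t ht
    rw [interior_Ici] at ht
    have hseg : lineMap a b t - a = t • (b - a) := by
      simpa using lineMap_vsub_left a b t
    calc ⟪gradient f (lineMap a b t) - gradient f a, b - a⟫_ℝ - L * t * ‖b - a‖ ^ 2
        ≤ ‖gradient f (lineMap a b t) - gradient f a‖ * ‖b - a‖ - L * t * ‖b - a‖ ^ 2 := by
          gcongr; exact real_inner_le_norm _ _
      _ ≤ L * ‖lineMap a b t - a‖ * ‖b - a‖ - L * t * ‖b - a‖ ^ 2 := by
          gcongr; exact hlip _ _
      _ = 0 := by
          rw [hseg, norm_smul, Real.norm_of_nonneg ht.le]; ring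
  have hanti : AntitoneOn k (Ici 0) :=
    antitoneOn_of_hasDerivWithinAt_nonpos (convex_Ici 0)
      (fun t _ ↦ (hk t).continuousAt.continuousWithinAt)
      (fun t _ ↦ (hk t).hasDerivWithinAt) hk_nonpos
  have h01 := hanti (mem_Ici.2 le_rfl) (mem_Ici.2 zero_le_one) zero_le_one
  simp only [k, lineMap_apply_zero, lineMap_apply_one] at h01
  linarith

lemma StrongConvexOn.le_of_lipschitz_gradient [Nontrivial E] (hsc : StrongConvexOn univ m f)
    (hf : Differentiable ℝ f) (hlip : ∀ x y, ‖gradient f x - gradient f y‖ ≤ L * ‖x - y‖) :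
    m ≤ L := by
  obtain ⟨v, hv⟩ := exists_ne (0 : E)
  have hlower := hsc.add_inner_add_le (hf 0).hasGradientAt v
  have hupper := le_add_inner_add_of_lipschitz_gradient hf hlip 0 v
  have hpos : 0 < ‖v - 0‖ ^ 2 := by rw [sub_zero]; exact pow_pos (norm_pos_iff.2 hv) 2
  nlinarith

end FirstOrder

section ProxGradient

variable {E : Type*} [NormedAddCommGroup E] [InnerProductSpace ℝ E] [CompleteSpace E]
  {f h : E → ℝ} {m L : ℝ}

noncomputable def proxGradModel (f h : E → ℝ) (L : ℝ) (y u : E) : ℝ :=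
  f y + ⟪gradient f y, u - y⟫_ℝ + L / 2 * ‖u - y‖ ^ 2 + h u

lemma proxGradStep_le (hsc : StrongConvexOn univ m f) (hf : Differentiable ℝ f)
    (hlip : ∀ x y, ‖gradient f x - gradient f y‖ ≤ L * ‖x - y‖) (hh : ConvexOn ℝ univ h)
    (hm : 0 ≤ m) (hmL : m ≤ L) (hL : 0 < L) {y x' : E}
    (hx' : IsMinOn (proxGradModel f h L y) univ x') (w : E) :
    f x' + h x' ≤ m / L * (f w + h w) + (1 - m / L) * (f y + h y) := by
  set t := m / L
  have ht0 : 0 ≤ t := div_nonneg hm hL.le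
  have ht1 : 0 ≤ 1 - t := sub_nonneg.2 ((div_le_one hL).2 hmL)
  set z := t • w + (1 - t) • y
  have hzy : ‖z - y‖ ^ 2 = t ^ 2 * ‖w - y‖ ^ 2 := by
    rw [show z - y = t • (w - y) by module, norm_smul, Real.norm_of_nonneg ht0, mul_pow]
  have hdescent := le_add_inner_add_of_lipschitz_gradient hf hlip y x'
  have hmodel : proxGradModel f h L y x' ≤ proxGradModel f h L y z := hx' (mem_univ z)
  have hlower := hsc.add_inner_add_le (hf y).hasGradientAt z
  have hfz : f z ≤ t * f w + (1 - t) * f y - t * (1 - t) * (m / 2 * ‖w - y‖ ^ 2) :=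
    hsc.2 (mem_univ w) (mem_univ y) ht0 ht1 (add_sub_cancel t 1)
  have hhz : h z ≤ t * h w + (1 - t) * h y :=
    hh.2 (mem_univ w) (mem_univ y) ht0 ht1 (add_sub_cancel t 1)
  have hcoef : L / 2 * (t ^ 2 * ‖w - y‖ ^ 2)
      = m / 2 * (t ^ 2 * ‖w - y‖ ^ 2) + t * (1 - t) * (m / 2 * ‖w - y‖ ^ 2) := by
    rw [← mul_div_cancel₀ m hL.ne']; ring
  simp only [proxGradModel] at hmodel
  rw [hzy] at hmodel hlower
  linarith

theorem proxGrad_sub_le_pow_mul (hsc : StrongConvexOn univ m f) (hf : Differentiable ℝ f)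
    (hlip : ∀ x y, ‖gradient f x - gradient f y‖ ≤ L * ‖x - y‖) (hh : ConvexOn ℝ univ h)
    (hm : 0 ≤ m) (hL : 0 < L) {x : ℕ → E}
    (hx : ∀ k, IsMinOn (proxGradModel f h L (x k)) univ (x (k + 1))) (w : E) (k : ℕ) :
    (f + h) (x k) - (f + h) w ≤ (1 - m / L) ^ k * ((f + h) (x 0) - (f + h) w) := by
  rcases subsingleton_or_nontrivial E with hE | hE
  -- `m ≤ L` needs a nonzero vector; in the trivial space both sides vanish.
  · simp [Subsingleton.elim (x k) w, Subsingleton.elim (x 0) w]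
  have hmL := hsc.le_of_lipschitz_gradient hf hlip
  have ht1 : 0 ≤ 1 - m / L := sub_nonneg.2 ((div_le_one hL).2 hmL)
  induction k with
  | zero => simp
  | succ k ih =>
    have hstep := proxGradStep_le hsc hf hlip hh hm hmL hL (hx k) w
    calc (f + h) (x (k + 1)) - (f + h) w ≤ (1 - m / L) * ((f + h) (x k) - (f + h) w) := by
          simp only [Pi.add_apply]; linarith
      _ ≤ (1 - m / L) * ((1 - m / L) ^ k * ((f + h) (x 0) - (f + h) w)) := by gcongr
      _ = (1 - m / L) ^ (k + 1) * ((f + h) (x 0) - (f + h) w) := by ring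

end ProxGradient

section SoftThreshold

noncomputable def softThreshold (α c : ℝ) : ℝ := Real.sign c * max (|c| - α) 0

lemma softThreshold_sq_add_abs_le {α : ℝ} (hα : 0 ≤ α) (c u : ℝ) :
    (softThreshold α c - c) ^ 2 / 2 + α * |softThreshold α c| ≤ (u - c) ^ 2 / 2 + α * |u| := by
  rcases le_or_gt |c| α with hc | hc
  · have huc : u * c ≤ α * |u| :=
      calc u * c ≤ |u| * |c| := (le_abs_self _).trans (abs_mul u c).le
        _ ≤ |u| * α := by gcongr
        _ = α * |u| := mul_comm _ _
    rw [softThreshold, max_eq_right (by linarith)]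
    simp only [mul_zero, abs_zero]
    nlinarith [sq_nonneg u]
  · rcases lt_or_gt_of_ne (show c ≠ 0 by rintro rfl; simp at hc; linarith) with hneg | hpos
    · rw [abs_of_neg hneg] at hc
      rw [softThreshold, Real.sign_of_neg hneg, abs_of_neg hneg, max_eq_left (by linarith),
        abs_of_nonpos (by linarith)]
      nlinarith [sq_nonneg (u - c - α), neg_abs_le u]
    · rw [abs_of_pos hpos] at hc
      rw [softThreshold, Real.sign_of_pos hpos, abs_of_pos hpos, max_eq_left (by linarith),
        abs_of_nonneg (by linarith)]
      nlinarith [sq_nonneg (u - c + α), le_abs_self u]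

lemma softThreshold_mul_sub_add_sq_add_abs_le {L μ : ℝ} (hL : 0 < L) (hμ : 0 ≤ μ) (g y u : ℝ) :
    g * (softThreshold (μ / L) (y - 1 / L * g) - y)
        + L / 2 * (softThreshold (μ / L) (y - 1 / L * g) - y) ^ 2
        + μ * |softThreshold (μ / L) (y - 1 / L * g)|
      ≤ g * (u - y) + L / 2 * (u - y) ^ 2 + μ * |u| := by
  have hprox := softThreshold_sq_add_abs_le (div_nonneg hμ hL.le) (y - 1 / L * g) u
  have hscale : ∀ v, g * (v - y) + L / 2 * (v - y) ^ 2 + μ * |v|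
      = L * ((v - (y - 1 / L * g)) ^ 2 / 2 + μ / L * |v|) - g ^ 2 / (2 * L) := by
    intro v; field_simp; ring
  rw [hscale, hscale]
  gcongr

variable {ι : Type*} [Fintype ι]

lemma convexOn_sum_abs : ConvexOn ℝ univ (fun x : EuclideanSpace ℝ ι ↦ ∑ i, |x i|) := by
  refine ⟨convex_univ, fun x _ y _ a b ha hb _ ↦ ?_⟩
  simp only [smul_eq_mul, Finset.mul_sum, ← Finset.sum_add_distrib]
  refine Finset.sum_le_sum fun i _ ↦ ?_
  calc |(a • x + b • y) i| ≤ |a * x i| + |b * y i| := by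
        simpa using abs_add_le (a * x i) (b * y i)
    _ = a * |x i| + b * |y i| := by rw [abs_mul, abs_mul, abs_of_nonneg ha, abs_of_nonneg hb]

lemma isMinOn_proxGradModel_softThreshold {f : EuclideanSpace ℝ ι → ℝ} {L μ : ℝ} (hL : 0 < L)
    (hμ : 0 ≤ μ) {y x' : EuclideanSpace ℝ ι}
    (hx' : ∀ i, x' i = softThreshold (μ / L) (y i - 1 / L * gradient f y i)) :
    IsMinOn (proxGradModel f (fun x ↦ μ * ∑ i, |x i|) L y) univ x' := by
  have hsum : ∀ v, proxGradModel f (fun x ↦ μ * ∑ i, |x i|) L y v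
      = f y + ∑ i, (gradient f y i * (v i - y i) + L / 2 * (v i - y i) ^ 2 + μ * |v i|) := by
    intro v
    simp only [proxGradModel, PiLp.inner_apply, EuclideanSpace.norm_sq_eq, Real.norm_eq_abs,
      sq_abs, Finset.sum_add_distrib, Finset.mul_sum]
    simp [mul_comm, add_assoc]
  refine isMinOn_univ_iff.2 fun u ↦ ?_
  rw [hsum, hsum]
  gcongr (f y + ?_)
  refine Finset.sum_le_sum fun i _ ↦ ?_
  rw [hx' i]
  exact softThreshold_mul_sub_add_sq_add_abs_le hL hμ _ _ _

end SoftThreshold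

theorem stmt_4_general {n : ℕ}
    (f : EuclideanSpace ℝ (Fin n) → ℝ)
    (lam L mu : ℝ) (hlam : 0 < lam) (hL : 0 < L) (hmu : 0 < mu)
    (hf : ContDiff ℝ 1 f)
    (hsc : ∀ x y : EuclideanSpace ℝ (Fin n), ∀ t ∈ Set.Icc (0:ℝ) 1,
      f (t • x + (1 - t) • y)
        ≤ t * f x + (1 - t) * f y - lam / 2 * t * (1 - t) * ‖x - y‖ ^ 2)
    (hlip : ∀ x y : EuclideanSpace ℝ (Fin n),
      ‖gradient f x - gradient f y‖ ≤ L * ‖x - y‖)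
    (φ : EuclideanSpace ℝ (Fin n) → ℝ)
    (hφ : ∀ x, φ x = f x + mu * ∑ i, |x i|)
    (xstar : EuclideanSpace ℝ (Fin n))
    (x : ℕ → EuclideanSpace ℝ (Fin n))
    (hista : ∀ k : ℕ, ∀ i : Fin n,
      x (k + 1) i = Real.sign (x k i - (1 / L) * gradient f (x k) i) *
        max (|x k i - (1 / L) * gradient f (x k) i| - mu / L) 0) :
    ∀ k : ℕ, φ (x k) - φ xstar ≤ (1 - lam / L) ^ k * (φ (x 0) - φ xstar) := by
  obtain rfl : φ = f + fun x ↦ mu * ∑ i, |x i| := funext hφ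
  exact proxGrad_sub_le_pow_mul (strongConvexOn_univ_of_forall hsc)
    (hf.differentiable one_ne_zero) hlip (convexOn_sum_abs.smul hmu.le) hlam.le hL
    (fun k ↦ isMinOn_proxGradModel_softThreshold hL hmu.le (hista k)) xstar

/-- Linear convergence of the ISTA iteration
`x^{k+1} = S_{μ/L}(x^k − (1/L)∇f(x^k))` for strongly convex `f` with
Lipschitz gradient. -/
theorem stmt_4 {n : ℕ} (hn : 0 < n)
    (f : EuclideanSpace ℝ (Fin n) → ℝ)
    (lam L mu : ℝ) (hlam : 0 < lam) (hL : 0 < L) (hmu : 0 < mu)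
    (hf : ContDiff ℝ 1 f)
    (hsc : ∀ x y : EuclideanSpace ℝ (Fin n), ∀ t ∈ Set.Icc (0:ℝ) 1,
      f (t • x + (1 - t) • y)
        ≤ t * f x + (1 - t) * f y - lam / 2 * t * (1 - t) * ‖x - y‖ ^ 2)
    (hlip : ∀ x y : EuclideanSpace ℝ (Fin n),
      ‖gradient f x - gradient f y‖ ≤ L * ‖x - y‖)
    (φ : EuclideanSpace ℝ (Fin n) → ℝ)
    (hφ : ∀ x, φ x = f x + mu * ∑ i, |x i|)
    (xstar : EuclideanSpace ℝ (Fin n)) (hmin : ∀ y, φ xstar ≤ φ y)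
    (x : ℕ → EuclideanSpace ℝ (Fin n))
    (hista : ∀ k : ℕ, ∀ i : Fin n,
      x (k + 1) i = Real.sign (x k i - (1 / L) * gradient f (x k) i) *
        max (|x k i - (1 / L) * gradient f (x k) i| - mu / L) 0) :
    ∀ k : ℕ, φ (x k) - φ xstar ≤ (1 - lam / L) ^ k * (φ (x 0) - φ xstar) :=
  stmt_4_general f lam L mu hlam hL hmu hf hsc hlip φ hφ xstar x hista
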